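/- Let Λ = R[x_1,...,x_m] be a polynomial ring over a commutative ring R and let K^• be the Koszul complex of Λ with respect to the regular sequence x_1,...,x_m, i.e., the exterior algebra ⨁_{S⊆{1,...,m}} Λ e_S with differential d e_{x_i} = x_i. Let C^• ⊆ K^• be the graded R-submodule generated by elements of the form (∏_{i∈S''} x_i) e_{S'} for disjoint subsets S', S'' of {1,...,m}. Then C^• is a subcomplex of K^•, C^• is acyclic in nonzero degrees, and H^0(C^•) is a free R-module of rank 1 generated by the class of e_∅. -/

import Mathlib

open MvPolynomial

/-- Degree-`(−s)` component of the Koszul complex of `Λ = R[x_1,…,x_m]` with respect to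
the regular sequence `x_1,…,x_m`: a copy of `Λ` for each exterior index set `S` with
`|S| = s` (the coefficient of `e_S`). -/
abbrev KosC (R : Type) [CommRing R] (m s : ℕ) : Type :=
  {S : Finset (Fin m) // S.card = s} → MvPolynomial (Fin m) R

/-- The Koszul differential `d e_{x_i} = x_i`, of degree `+1`, written on coefficient
functions: `(d f)(S) = ∑_{j∉S} (−1)^{#{j'∈S : j'<j}} x_j · f(S ∪ {j})`. -/
noncomputable def kosD (R : Type) [CommRing R] (m s : ℕ) :
    KosC R m (s + 1) →ₗ[R] KosC R m s :=
  LinearMap.pi fun S =>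
    ∑ j ∈ (S.1ᶜ).attach,
      ((-1 : ℤ) ^ ((S.1.filter (fun x => x < j.1)).card)) •
        ((LinearMap.mulLeft R (X j.1)).restrictScalars R ∘ₗ
          LinearMap.proj
            (⟨insert j.1 S.1, by
                rw [Finset.card_insert_of_notMem (Finset.mem_compl.mp j.2), S.2]⟩ :
              {S : Finset (Fin m) // S.card = s + 1}))

/-- The truncated Koszul subcomplex `C^•`: in each component, the `R`-span of the
squarefree monomials `∏_{i∈T} x_i` with `T` disjoint from the exterior index set `S`. -/
noncomputable def kosTrunc (R : Type) [CommRing R] (m s : ℕ) : Submodule R (KosC R m s) :=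
  Submodule.pi Set.univ fun S =>
    Submodule.span R
      {q : MvPolynomial (Fin m) R |
        ∃ T : Finset (Fin m), Disjoint T S.1 ∧ q = ∏ i ∈ T, X i}

/-!
For a variable `x_i`, let `D_i` divide by `x_i` the monomials whose least variable is `x_i` and
kill all other monomials. Then `∑_{j < i} x_j D_j + D_i ∘ x_i = id` for every `i`, and
`∑_j x_j D_j = id - (constant term)`. The map `h` sending the `e_S`-coefficient `p` to
`D_i p · e_{S ∪ {i}}` whenever `i < min S` is therefore a contracting homotopy of the whole
Koszul complex: `dh + hd = id` in negative degrees and `dh = id - (constant term)` in degree `0`.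
Since `D_i` turns a squarefree monomial free of the variables in `S` into one free of the
variables in `S ∪ {i}`, `h` preserves `C^•`, which is hence acyclic with `H^0(C^•) ≅ R` through
the constant coefficient.
-/

open Finset

theorem Finset.isLeast_coe_iff_eq_min' {σ : Type*} [LinearOrder σ] {s : Finset σ}
    (hs : s.Nonempty) (j : σ) : IsLeast (s : Set σ) j ↔ j = s.min' hs :=
  ⟨fun h => h.unique (isLeast_min' s hs), fun h => h ▸ isLeast_min' s hs⟩

theorem Finsupp.support_single_one_add {σ : Type*} [DecidableEq σ] (j : σ) (α : σ →₀ ℕ) :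
    (single j 1 + α).support = insert j α.support := by
  rw [support_add_eq_union, support_single j one_ne_zero, insert_eq]

namespace MvPolynomial

section LeastVariable

variable {R σ : Type*} [CommSemiring R]

theorem X_mul_monomial (j : σ) (α : σ →₀ ℕ) (c : R) :
    X j * monomial α c = monomial (Finsupp.single j 1 + α) c := by
  rw [X, monomial_mul, one_mul]

variable [LinearOrder σ]

open Classical in
noncomputable def divLeastVar (R : Type*) [CommSemiring R] (i : σ) :
    MvPolynomial σ R →ₗ[R] MvPolynomial σ R :=
  (basisMonomials σ R).constr R fun α =>
    if IsLeast (α.support : Set σ) i then monomial (α - Finsupp.single i 1) 1 else 0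

open Classical in
theorem divLeastVar_monomial (i : σ) (α : σ →₀ ℕ) (c : R) :
    divLeastVar R i (monomial α c) =
      if IsLeast (α.support : Set σ) i then monomial (α - Finsupp.single i 1) c else 0 := by
  have hbasis : monomial α (1 : R) = basisMonomials σ R α := by rw [coe_basisMonomials]
  rw [← mul_one c, ← smul_eq_mul, ← smul_monomial, map_smul, hbasis, divLeastVar,
    Module.Basis.constr_basis]
  split_ifs <;> simp [smul_monomial]

theorem divLeastVar_X_mul_of_lt {i j : σ} (hji : j < i) (p : MvPolynomial σ R) :
    divLeastVar R i (X j * p) = 0 := by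
  classical
  induction p using MvPolynomial.induction_on' with
  | monomial α c =>
    rw [X_mul_monomial, divLeastVar_monomial, if_neg]
    rintro ⟨-, hi⟩
    exact hji.not_ge (hi (by simp [Finsupp.support_single_one_add]))
  | add p q hp hq => rw [mul_add, map_add, hp, hq, add_zero]

theorem divLeastVar_X_mul_of_gt {i j : σ} (hij : i < j) (p : MvPolynomial σ R) :
    divLeastVar R i (X j * p) = X j * divLeastVar R i p := by
  classical
  induction p using MvPolynomial.induction_on' with
  | monomial α c =>
    have hleast : IsLeast (↑(Finsupp.single j 1 + α).support : Set σ) i ↔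
        IsLeast (α.support : Set σ) i := by
      simp only [Finsupp.support_single_one_add, coe_insert, IsLeast, Set.mem_insert_iff, mem_coe,
        hij.ne, false_or, lowerBounds_insert, Set.mem_inter_iff, Set.mem_Iic, hij.le, true_and]
    have hsub : Finsupp.single j 1 + α - Finsupp.single i 1 =
        Finsupp.single j 1 + (α - Finsupp.single i 1) := by
      ext k
      rcases eq_or_ne j k with rfl | hjk
      · simp [hij.ne]
      · simp [Finsupp.single_apply, hjk]
    rw [X_mul_monomial, divLeastVar_monomial, divLeastVar_monomial, hleast, hsub]
    split_ifs
    · exact (X_mul_monomial _ _ _).symm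
    · rw [mul_zero]
  | add p q hp hq => rw [mul_add, map_add, map_add, hp, hq, mul_add]

open Classical in
theorem divLeastVar_X_mul_monomial (i : σ) (α : σ →₀ ℕ) (c : R) :
    divLeastVar R i (X i * monomial α c) =
      if i ∈ lowerBounds (α.support : Set σ) then monomial α c else 0 := by
  rw [X_mul_monomial, divLeastVar_monomial, add_tsub_cancel_left]
  simp [IsLeast, Finsupp.support_single_one_add, lowerBounds_insert]

open Classical in
theorem X_mul_divLeastVar_monomial (j : σ) (α : σ →₀ ℕ) (c : R) :
    X j * divLeastVar R j (monomial α c) =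
      if IsLeast (α.support : Set σ) j then monomial α c else 0 := by
  rw [divLeastVar_monomial]
  split_ifs with h
  · rw [X_mul_monomial, add_tsub_cancel_of_le]
    simpa [Finsupp.single_le_iff, Nat.one_le_iff_ne_zero] using h.1
  · rw [mul_zero]

theorem sum_Iio_X_mul_divLeastVar_add [LocallyFiniteOrderBot σ] (i : σ) (p : MvPolynomial σ R) :
    ∑ j ∈ Iio i, X j * divLeastVar R j p + divLeastVar R i (X i * p) = p := by
  classical
  induction p using MvPolynomial.induction_on' with
  | monomial α c =>
    simp_rw [X_mul_divLeastVar_monomial, divLeastVar_X_mul_monomial]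
    rcases α.support.eq_empty_or_nonempty with hα | hα
    · simp [hα, IsLeast]
    · simp_rw [isLeast_coe_iff_eq_min' hα, (isLeast_min' _ hα).lowerBounds_eq, sum_ite_eq',
        mem_Iio, Set.mem_Iic]
      by_cases h : α.support.min' hα < i
      · simp [h, h.not_ge]
      · simp [h, not_lt.mp h]
  | add p q hp hq =>
    simp only [mul_add, map_add, sum_add_distrib]
    rw [add_add_add_comm, hp, hq]

theorem sum_X_mul_divLeastVar {R : Type*} [CommRing R] [Fintype σ] (p : MvPolynomial σ R) :
    ∑ j, X j * divLeastVar R j p = p - C (coeff 0 p) := by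
  classical
  induction p using MvPolynomial.induction_on' with
  | monomial α c =>
    simp_rw [X_mul_divLeastVar_monomial, coeff_monomial]
    rcases α.support.eq_empty_or_nonempty with hα | hα
    · rw [Finsupp.support_eq_empty] at hα
      simp [hα, IsLeast]
    · have hα0 : α ≠ 0 := by rwa [← Finsupp.support_nonempty_iff]
      simp [isLeast_coe_iff_eq_min' hα, hα0]
  | add p q hp hq =>
    simp only [mul_add, map_add, sum_add_distrib, coeff_add, hp, hq]
    ring

end LeastVariable

end MvPolynomial

section SquarefreeSpan

variable {R σ : Type*} [CommSemiring R]

noncomputable def squarefreeSpan (R : Type*) [CommSemiring R] (S : Finset σ) :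
    Submodule R (MvPolynomial σ R) :=
  Submodule.span R {q | ∃ T : Finset σ, Disjoint T S ∧ q = ∏ i ∈ T, X i}

theorem prod_X_eq_monomial (T : Finset σ) :
    (∏ i ∈ T, X i : MvPolynomial σ R) = monomial (∑ i ∈ T, Finsupp.single i 1) 1 :=
  (monomial_sum_one T _).symm

theorem X_mul_mem_squarefreeSpan [DecidableEq σ] {S : Finset σ} {j : σ} (hj : j ∉ S)
    {p : MvPolynomial σ R} (hp : p ∈ squarefreeSpan R (insert j S)) :
    X j * p ∈ squarefreeSpan R S := by
  induction hp using Submodule.span_induction with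
  | mem q hq =>
    obtain ⟨T, hT, rfl⟩ := hq
    rw [disjoint_insert_right] at hT
    refine Submodule.subset_span ⟨insert j T, disjoint_insert_left.mpr ⟨hj, hT.2⟩, ?_⟩
    rw [prod_insert hT.1]
  | zero => simp
  | add p q _ _ hp hq => rw [mul_add]; exact add_mem hp hq
  | smul r p _ hp => rw [mul_smul_comm]; exact Submodule.smul_mem _ _ hp

theorem divLeastVar_mem_squarefreeSpan [LinearOrder σ] {S : Finset σ} {i : σ}
    {p : MvPolynomial σ R} (hp : p ∈ squarefreeSpan R (S.erase i)) :
    divLeastVar R i p ∈ squarefreeSpan R S := by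
  induction hp using Submodule.span_induction with
  | mem q hq =>
    obtain ⟨T, hT, rfl⟩ := hq
    by_cases hi : i ∈ T
    · have hdisj : Disjoint (T.erase i) S := by
        rw [disjoint_left] at hT ⊢
        intro a ha haS
        exact hT (mem_of_mem_erase ha) (mem_erase.mpr ⟨ne_of_mem_erase ha, haS⟩)
      rw [← mul_prod_erase T _ hi, prod_X_eq_monomial, divLeastVar_X_mul_monomial,
        ← prod_X_eq_monomial]
      split_ifs
      · exact Submodule.subset_span ⟨T.erase i, hdisj, rfl⟩
      · exact zero_mem _
    · rw [prod_X_eq_monomial, divLeastVar_monomial, if_neg]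
      · exact zero_mem _
      · exact fun h => hi (by simpa [Finset.sum_apply', Finsupp.single_apply] using h.1)
  | zero => rw [map_zero]; exact zero_mem _
  | add p q _ _ hp hq => rw [map_add]; exact add_mem hp hq
  | smul r p _ hp => rw [map_smul]; exact Submodule.smul_mem _ _ hp

end SquarefreeSpan

section KoszulHomotopy

variable {R : Type} [CommRing R] {m : ℕ}

noncomputable def kosCoeff {s : ℕ} (f : KosC R m s) (U : Finset (Fin m)) :
    MvPolynomial (Fin m) R :=
  if h : U.card = s then f ⟨U, h⟩ else 0

theorem kosCoeff_of_card_eq {s : ℕ} (f : KosC R m s) {U : Finset (Fin m)} (hU : U.card = s) :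
    kosCoeff f U = f ⟨U, hU⟩ :=
  dif_pos hU

def kosSign (S : Finset (Fin m)) (j : Fin m) : ℤ :=
  (-1) ^ (S.filter (· < j)).card

theorem kosSign_of_forall_le {S : Finset (Fin m)} {j : Fin m} (h : ∀ x ∈ S, j ≤ x) :
    kosSign S j = 1 := by
  rw [kosSign, filter_false_of_mem fun x hx => not_lt.mpr (h x hx), card_empty, pow_zero]

theorem kosSign_erase {S : Finset (Fin m)} {i j : Fin m} (hi : i ∈ S) (hij : i < j) :
    kosSign S j = -kosSign (S.erase i) j := by
  have hmem : i ∈ S.filter (· < j) := mem_filter.mpr ⟨hi, hij⟩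
  obtain ⟨k, hk⟩ := Nat.exists_eq_succ_of_ne_zero (card_ne_zero_of_mem hmem)
  rw [kosSign, kosSign, filter_erase, card_erase_of_mem hmem, hk, Nat.succ_sub_one, pow_succ,
    mul_neg_one]

theorem kosD_apply {s : ℕ} (f : KosC R m (s + 1)) (S : {S : Finset (Fin m) // S.card = s}) :
    kosD R m s f S = ∑ j ∈ S.1ᶜ, kosSign S.1 j • (X j * kosCoeff f (insert j S.1)) := by
  rw [kosD, LinearMap.pi_apply, LinearMap.sum_apply, ← sum_attach S.1ᶜ]
  refine sum_congr rfl fun j _ => ?_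
  rw [kosCoeff_of_card_eq]
  rfl

theorem coeff_zero_kosD {s : ℕ} (f : KosC R m (s + 1)) (S : {S : Finset (Fin m) // S.card = s}) :
    coeff 0 (kosD R m s f S) = 0 := by
  rw [kosD_apply, coeff_sum]
  refine sum_eq_zero fun j _ => ?_
  rw [coeff_smul, coeff_X_mul', if_neg (by simp), smul_zero]

theorem nonempty_of_card_eq_succ {s : ℕ} (S : {S : Finset (Fin m) // S.card = s + 1}) :
    S.1.Nonempty :=
  card_pos.mp (by rw [S.2]; exact s.succ_pos)

noncomputable def kosHomotopy (R : Type) [CommRing R] (m s : ℕ) :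
    KosC R m s →ₗ[R] KosC R m (s + 1) where
  toFun f S :=
    divLeastVar R (S.1.min' (nonempty_of_card_eq_succ S))
      (kosCoeff f (S.1.erase (S.1.min' (nonempty_of_card_eq_succ S))))
  map_add' f g := by
    funext S
    simp only [kosCoeff, Pi.add_apply]
    split_ifs <;> simp
  map_smul' r f := by
    funext S
    simp only [kosCoeff, Pi.smul_apply, RingHom.id_apply]
    split_ifs <;> simp

theorem kosHomotopy_apply {s : ℕ} (f : KosC R m s) (S : {S : Finset (Fin m) // S.card = s + 1}) :
    kosHomotopy R m s f S = divLeastVar R (S.1.min' (nonempty_of_card_eq_succ S))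
      (kosCoeff f (S.1.erase (S.1.min' (nonempty_of_card_eq_succ S)))) :=
  rfl

theorem kosCoeff_kosHomotopy {s : ℕ} (f : KosC R m s) {U : Finset (Fin m)}
    (hU : U.card = s + 1) (hne : U.Nonempty) :
    kosCoeff (kosHomotopy R m s f) U =
      divLeastVar R (U.min' hne) (kosCoeff f (U.erase (U.min' hne))) :=
  kosCoeff_of_card_eq _ hU


/-- The `j`-th summands of `(d h f)(S)` and of `(h d f)(S)`: they cancel unless `j < min S`. -/
theorem kosSign_smul_kosHomotopy_add {s : ℕ} (f : KosC R m (s + 1)) {S : Finset (Fin m)}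
    (hS : S.card = s + 1) (hne : S.Nonempty) {j : Fin m} (hj : j ∉ S) :
    kosSign S j • (X j * kosCoeff (kosHomotopy R m (s + 1) f) (insert j S)) +
        kosSign (S.erase (S.min' hne)) j •
          divLeastVar R (S.min' hne) (X j * kosCoeff f (insert j (S.erase (S.min' hne)))) =
      if j < S.min' hne then X j * divLeastVar R j (kosCoeff f S) else 0 := by
  have hcard : (insert j S).card = s + 1 + 1 := by rw [card_insert_of_notMem hj, hS]
  rw [kosCoeff_kosHomotopy f hcard (insert_nonempty j S), min'_insert _ _ hne]
  split_ifs with hlt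
  · rw [min_eq_left hlt.le, erase_insert hj,
      kosSign_of_forall_le fun x hx => (hlt.trans_le (min'_le S x hx)).le, one_smul,
      divLeastVar_X_mul_of_lt hlt, smul_zero, add_zero]
  · have hgt : S.min' hne < j :=
      lt_of_le_of_ne (not_lt.mp hlt) fun h => hj (h ▸ min'_mem S hne)
    rw [min_eq_right hgt.le, erase_insert_of_ne (ne_of_gt hgt), kosSign_erase (min'_mem S hne) hgt,
      divLeastVar_X_mul_of_gt hgt, neg_smul, neg_add_cancel]

theorem kosD_kosHomotopy_add_kosHomotopy_kosD {s : ℕ} (f : KosC R m (s + 1)) :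
    kosD R m (s + 1) (kosHomotopy R m (s + 1) f) + kosHomotopy R m s (kosD R m s f) = f := by
  funext S
  obtain ⟨S, hS⟩ := S
  have hne : S.Nonempty := nonempty_of_card_eq_succ ⟨S, hS⟩
  set i := S.min' hne
  have hi : i ∈ S := min'_mem S hne
  have hcard : (S.erase i).card = s := by rw [card_erase_of_mem hi, hS, Nat.add_sub_cancel]
  have hHd : kosHomotopy R m s (kosD R m s f) ⟨S, hS⟩ =
      ∑ j ∈ Sᶜ, kosSign (S.erase i) j •
          divLeastVar R i (X j * kosCoeff f (insert j (S.erase i))) +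
        divLeastVar R i (X i * kosCoeff f S) := by
    rw [kosHomotopy_apply, kosCoeff_of_card_eq _ hcard, kosD_apply, compl_erase,
      sum_insert (by simp [hi]), map_add, map_sum, add_comm,
      kosSign_of_forall_le fun x hx => min'_le S x (mem_of_mem_erase hx), one_smul,
      insert_erase hi]
    simp only [map_zsmul]
    rfl
  have hIio : Sᶜ.filter (· < i) = Iio i := by
    ext j
    simp only [mem_filter, mem_compl, mem_Iio, and_iff_right_iff_imp]
    exact fun hj hjS => (hj.trans_le (min'_le S j hjS)).false
  rw [Pi.add_apply, kosD_apply, hHd, ← add_assoc, ← sum_add_distrib,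
    sum_congr rfl fun j hj => kosSign_smul_kosHomotopy_add f hS hne (mem_compl.mp hj),
    ← sum_filter, hIio, sum_Iio_X_mul_divLeastVar_add, kosCoeff_of_card_eq _ hS]

theorem kosD_kosHomotopy_zero (f : KosC R m 0) (S : {S : Finset (Fin m) // S.card = 0}) :
    kosD R m 0 (kosHomotopy R m 0 f) S = f S - C (coeff 0 (f S)) := by
  obtain ⟨S, hS⟩ := S
  obtain rfl := card_eq_zero.mp hS
  rw [kosD_apply, ← sum_X_mul_divLeastVar]
  refine sum_congr (by simp) fun j _ => ?_
  rw [kosSign_of_forall_le (by simp), one_smul, insert_empty,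
    kosCoeff_kosHomotopy _ (card_singleton j) (singleton_nonempty j), min'_singleton,
    erase_singleton, kosCoeff_of_card_eq f hS]

theorem mem_kosTrunc_iff {s : ℕ} (f : KosC R m s) :
    f ∈ kosTrunc R m s ↔ ∀ S, f S ∈ squarefreeSpan R S.1 := by
  simp [kosTrunc, Submodule.mem_pi, squarefreeSpan]

theorem kosD_mem_kosTrunc {s : ℕ} {f : KosC R m (s + 1)} (hf : f ∈ kosTrunc R m (s + 1)) :
    kosD R m s f ∈ kosTrunc R m s := by
  rw [mem_kosTrunc_iff] at hf ⊢
  intro S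
  rw [kosD_apply]
  refine Submodule.sum_mem _ fun j hj => zsmul_mem ?_ _
  have hjS : j ∉ S.1 := mem_compl.mp hj
  have hcard : (insert j S.1).card = s + 1 := by rw [card_insert_of_notMem hjS, S.2]
  rw [kosCoeff_of_card_eq f hcard]
  exact X_mul_mem_squarefreeSpan hjS (hf ⟨insert j S.1, hcard⟩)

theorem kosHomotopy_mem_kosTrunc {s : ℕ} {f : KosC R m s} (hf : f ∈ kosTrunc R m s) :
    kosHomotopy R m s f ∈ kosTrunc R m (s + 1) := by
  rw [mem_kosTrunc_iff] at hf ⊢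
  intro S
  have hi : S.1.min' (nonempty_of_card_eq_succ S) ∈ S.1 := min'_mem _ _
  have hcard : (S.1.erase (S.1.min' (nonempty_of_card_eq_succ S))).card = s := by
    rw [card_erase_of_mem hi, S.2, Nat.add_sub_cancel]
  apply divLeastVar_mem_squarefreeSpan
  rw [kosCoeff_of_card_eq f hcard]
  exact hf ⟨_, hcard⟩

end KoszulHomotopy

section ZerothCohomology

variable (R : Type) [CommRing R] (m : ℕ)

theorem const_one_mem_kosTrunc (s : ℕ) : (fun _ => 1 : KosC R m s) ∈ kosTrunc R m s :=
  fun _ _ => Submodule.subset_span ⟨∅, by simp⟩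

noncomputable def kosAugmentation : kosTrunc R m 0 →ₗ[R] R :=
  lcoeff R 0 ∘ₗ LinearMap.proj ⟨∅, card_empty⟩ ∘ₗ (kosTrunc R m 0).subtype

theorem kosAugmentation_surjective : Function.Surjective (kosAugmentation R m) :=
  fun r => ⟨r • ⟨_, const_one_mem_kosTrunc R m 0⟩, by simp [kosAugmentation]⟩

theorem ker_kosAugmentation :
    LinearMap.ker (kosAugmentation R m) =
      (Submodule.map (kosD R m 0) (kosTrunc R m 1)).comap (kosTrunc R m 0).subtype := by
  ext ⟨f, hf⟩
  simp only [LinearMap.mem_ker, Submodule.mem_comap, Submodule.mem_map, Submodule.coe_subtype]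
  constructor
  · intro h0
    refine ⟨kosHomotopy R m 0 f, kosHomotopy_mem_kosTrunc hf, funext fun S => ?_⟩
    obtain rfl : S = ⟨∅, card_empty⟩ := Subtype.ext (card_eq_zero.mp S.2)
    rw [kosD_kosHomotopy_zero, show coeff 0 (f ⟨∅, card_empty⟩) = 0 from h0, map_zero,
      sub_zero]
  · rintro ⟨g, -, rfl⟩
    exact coeff_zero_kosD g _

end ZerothCohomology

theorem stmt12 (R : Type) [CommRing R] (m : ℕ) :
    (∀ (s : ℕ) (f : KosC R m (s + 1)), f ∈ kosTrunc R m (s + 1) →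
        kosD R m s f ∈ kosTrunc R m s) ∧
      (∀ (s : ℕ) (f : KosC R m (s + 1)), f ∈ kosTrunc R m (s + 1) →
        kosD R m s f = 0 →
          ∃ g : KosC R m (s + 2), g ∈ kosTrunc R m (s + 2) ∧ kosD R m (s + 1) g = f) ∧
      ∃ φ :
          (kosTrunc R m 0 ⧸
              Submodule.comap (kosTrunc R m 0).subtype
                (Submodule.map (kosD R m 0) (kosTrunc R m 1)))
            ≃ₗ[R] R,
        φ (Submodule.Quotient.mk
            ⟨(fun _ => 1 : KosC R m 0), by
              intro S _
              exact Submodule.subset_span ⟨∅, by simp⟩⟩) = 1 := by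
  refine ⟨fun s f hf => kosD_mem_kosTrunc hf, fun s f hf hdf => ?_, ?_⟩
  · refine ⟨kosHomotopy R m (s + 1) f, kosHomotopy_mem_kosTrunc hf, ?_⟩
    simpa [hdf] using kosD_kosHomotopy_add_kosHomotopy_kosD f
  · refine ⟨(Submodule.quotEquivOfEq _ _ (ker_kosAugmentation R m).symm).trans
      ((kosAugmentation R m).quotKerEquivOfSurjective (kosAugmentation_surjective R m)), ?_⟩
    rw [LinearEquiv.trans_apply, Submodule.quotEquivOfEq_mk,
      LinearMap.quotKerEquivOfSurjective_apply_mk]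
    exact coeff_zero_one
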